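/- For finite connected simple graphs Γ (with n vertices) and Ω, and tubings T of Γ and S of Ω, the products induced on tubings of the joined graph satisfy: (T ▷ S)∖{t_∪} ⊇ T, the three families T ▷ S, T ◁ S and T ⊥ S are tubings of the connected graph Γ ∪_{T,S} Ω; in particular each of T ▷ S, T ◁ S, T ⊥ S is a family of pairwise compatible tubes of Γ ∪_{T,S} Ω containing its universal tube. -/

import Mathlib

open scoped Classical
open TensorProduct

noncomputable section

/-- A finite simple graph whose vertices are a finite set of (totally ordered) naturals. -/
structure FinGraph : Type where
  verts : Finset ℕ
  Adj : ℕ → ℕ → Prop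
  symm : ∀ v w, Adj v w → Adj w v
  loopless : ∀ v, ¬ Adj v v
  support : ∀ v w, Adj v w → v ∈ verts ∧ w ∈ verts

namespace CDTub

/-- Connectivity of a vertex set within a graph: any two of its vertices are joined by a
walk staying inside the set. -/
def VConn (G : FinGraph) (s : Finset ℕ) : Prop :=
  ∀ v ∈ s, ∀ w ∈ s, Relation.ReflTransGen (fun a b => a ∈ s ∧ b ∈ s ∧ G.Adj a b) v w

/-- A tube: a nonempty set of vertices inducing a connected subgraph. -/
def IsTube (G : FinGraph) (t : Finset ℕ) : Prop :=
  t.Nonempty ∧ t ⊆ G.verts ∧ VConn G t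

/-- A connected (nonempty) graph: the universal tube is a tube. -/
def IsConnGraph (G : FinGraph) : Prop := IsTube G G.verts

/-- Two vertex sets are far apart: disjoint and with no edge between them. -/
def FarApart (G : FinGraph) (a b : Finset ℕ) : Prop :=
  Disjoint a b ∧ ¬ ∃ v ∈ a, ∃ w ∈ b, G.Adj v w

/-- Compatible tubes: nested or far apart. -/
def Compatible (G : FinGraph) (a b : Finset ℕ) : Prop :=
  a ⊆ b ∨ b ⊆ a ∨ FarApart G a b

/-- Linked tubes: disjoint and joined by an edge. -/
def Linked (G : FinGraph) (a b : Finset ℕ) : Prop :=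
  Disjoint a b ∧ ∃ v ∈ a, ∃ w ∈ b, G.Adj v w

/-- A tubing of a connected graph: pairwise compatible tubes containing the universal tube. -/
def IsTubing (G : FinGraph) (T : Finset (Finset ℕ)) : Prop :=
  G.verts ∈ T ∧ (∀ t ∈ T, IsTube G t) ∧
    ∀ t ∈ T, ∀ t' ∈ T, t ≠ t' → Compatible G t t'

/-- Induced subgraph on a set of vertices. -/
def induce (G : FinGraph) (t : Finset ℕ) : FinGraph where
  verts := t
  Adj v w := v ∈ t ∧ w ∈ t ∧ G.Adj v w
  symm := fun v w h => ⟨h.2.1, h.1, G.symm v w h.2.2⟩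
  loopless := fun v h => G.loopless v h.2.2
  support := fun _ _ h => ⟨h.1, h.2.1⟩

/-- Simultaneous reconnected complement with respect to a family `F` of tubes
(for a single tube, or a family of pairwise far apart tubes, this is the (iterated)
reconnected complement). -/
def reconnAll (G : FinGraph) (F : Finset (Finset ℕ)) : FinGraph where
  verts := G.verts \ F.biUnion id
  Adj v w := v ≠ w ∧ v ∈ G.verts \ F.biUnion id ∧ w ∈ G.verts \ F.biUnion id ∧
    (G.Adj v w ∨ ∃ f ∈ F, (∃ u ∈ f, G.Adj v u) ∧ ∃ u' ∈ f, G.Adj w u')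
  symm := by
    rintro v w ⟨hne, hv, hw, h⟩
    refine ⟨hne.symm, hw, hv, ?_⟩
    rcases h with h | ⟨f, hf, h1, h2⟩
    · exact Or.inl (G.symm _ _ h)
    · exact Or.inr ⟨f, hf, h2, h1⟩
  loopless := fun v h => h.1 rfl
  support := fun _ _ h => ⟨h.2.1, h.2.2.1⟩

/-- Reconnected complement `Γ_t^*` of a graph with respect to a tube. -/
def reconn (G : FinGraph) (t : Finset ℕ) : FinGraph := reconnAll G {t}

/-- The proper tubes of a tubing. -/
def properTubes (G : FinGraph) (T : Finset (Finset ℕ)) : Finset (Finset ℕ) :=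
  T.filter (fun s => s ≠ G.verts)

/-- The maximal proper tubes of a tubing. -/
def MaxtP (G : FinGraph) (T : Finset (Finset ℕ)) : Finset (Finset ℕ) :=
  (properTubes G T).filter (fun s => ∀ s' ∈ properTubes G T, s ⊆ s' → s = s')

/-- The iterated reconnected complement `Γ_T^*` with respect to the maximal proper tubes. -/
def gammaStar (G : FinGraph) (T : Finset (Finset ℕ)) : FinGraph :=
  reconnAll G (MaxtP G T)

/-- Restriction `T|_t` of a tubing to a tube. -/
def restrictT (T : Finset (Finset ℕ)) (t : Finset ℕ) : Finset (Finset ℕ) :=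
  T.filter (fun s => s ⊆ t)

/-- For a tube `s` of `Γ_T^*`, the tube `s̃` of `Γ`: the union of `s` with all maximal
proper tubes of `T` linked to `s`. -/
def tildeT (G : FinGraph) (T : Finset (Finset ℕ)) (s : Finset ℕ) : Finset ℕ :=
  s ∪ ((MaxtP G T).filter (fun m => Linked G m s)).biUnion id

/-- Substitution `T •_Γ S` of a tubing `S` of `Γ_T^*` into the tubing `T`. -/
def substT (G : FinGraph) (T S : Finset (Finset ℕ)) : Finset (Finset ℕ) :=
  T ∪ S.image (tildeT G T)

/-- The `t`-substitution `γ_t(T;S) = T ∪ (T|_t •_{Γ_t} S)`. -/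
def gammaSub (G : FinGraph) (T : Finset (Finset ℕ)) (t : Finset ℕ)
    (S : Finset (Finset ℕ)) : Finset (Finset ℕ) :=
  T ∪ substT (induce G t) (restrictT T t) S

/-- The tubing `T_t^*` induced on the reconnected complement `Γ_t^*`. -/
def indStar (T : Finset (Finset ℕ)) (t : Finset ℕ) : Finset (Finset ℕ) :=
  T.filter (fun s => Disjoint s t) ∪ (T.filter (fun s => t ⊂ s)).image (fun s => s \ t)

/-- The operation `T ◇ S` of Definition 2.4(2). -/
def diamond (G : FinGraph) (T : Finset (Finset ℕ)) (t : Finset ℕ)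
    (S : Finset (Finset ℕ)) : Finset (Finset ℕ) :=
  T ∪ S.filter (fun s => ¬ Linked G s t) ∪
    (S.filter (fun s => Linked G s t)).image (fun s => s ∪ t)

/-- The tubes of `T`, viewed as subsets of the subtype of vertices. -/
def tubeSets (G : FinGraph) (T : Finset (Finset ℕ)) : Set (Set {x // x ∈ G.verts}) :=
  {U | ∃ t ∈ T, U = {x : {x // x ∈ G.verts} | (x : ℕ) ∈ t}}

/-- The topology on the vertex set generated by the tubes of `T`. -/
def tubingTop (G : FinGraph) (T : Finset (Finset ℕ)) :
    TopologicalSpace {x // x ∈ G.verts} :=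
  TopologicalSpace.generateFrom (tubeSets G T)

/-- One-line notation of the permutation `σ_t`: the vertices of `t` in increasing order
followed by the remaining vertices in increasing order. -/
def sigmaList (X t : Finset ℕ) : List ℕ :=
  t.sort (· ≤ ·) ++ (X \ t).sort (· ≤ ·)

/-- Number of `Γ`-inversions of a permutation given by its one-line notation `l`:
pairs of positions `p < q` carrying values `a > b` which form an edge of `Γ`. -/
def invCount (G : FinGraph) (l : List ℕ) : ℕ :=
  ((Finset.range l.length ×ˢ Finset.range l.length).filter
    (fun pq => pq.1 < pq.2 ∧ l.getD pq.2 0 < l.getD pq.1 0 ∧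
      G.Adj (l.getD pq.1 0) (l.getD pq.2 0))).card

/-- The signature `sgn^Γ(σ) = (-1)^{inv_Γ(σ)}`. -/
def graphSgn (G : FinGraph) (l : List ℕ) : ℤ := (-1) ^ invCount G l

/-- Rank (1-based) of `v` inside a finite set `X` of naturals: the order-preserving
relabelling of `X` by `{1,…,|X|}`. -/
def rk (X : Finset ℕ) (v : ℕ) : ℕ := (X.filter (fun u => u ≤ v)).card

/-- Order-preserving relabelling of a graph by the initial segment `{1,…,n}`. -/
def relabelG (G : FinGraph) : FinGraph where
  verts := G.verts.image (rk G.verts)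
  Adj i j := i ≠ j ∧ ∃ v w, G.Adj v w ∧ i = rk G.verts v ∧ j = rk G.verts w
  symm := by
    rintro i j ⟨hne, v, w, h, hi, hj⟩
    exact ⟨hne.symm, w, v, G.symm _ _ h, hj, hi⟩
  loopless := fun _ h => h.1 rfl
  support := by
    rintro i j ⟨hne, v, w, h, hi, hj⟩
    exact ⟨Finset.mem_image.mpr ⟨v, (G.support _ _ h).1, hi.symm⟩,
      Finset.mem_image.mpr ⟨w, (G.support _ _ h).2, hj.symm⟩⟩

/-- Order-preserving relabelling of a subset of `X`. -/
def relabelF (X t : Finset ℕ) : Finset ℕ := t.image (rk X)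

/-- Order-preserving relabelling of a family of subsets of `X`. -/
def relabelT (X : Finset ℕ) (T : Finset (Finset ℕ)) : Finset (Finset ℕ) :=
  T.image (relabelF X)

/-- Connected components (in `G`) of a set of vertices. -/
def comps (G : FinGraph) (s : Finset ℕ) : Finset (Finset ℕ) :=
  s.image (fun v => s.filter (fun w =>
    Relation.ReflTransGen (fun a b => a ∈ s ∧ b ∈ s ∧ G.Adj a b) v w))

/-- The restriction map `res_Ω^Γ` on tubings: replace each tube by its connected
components in `Ω`. -/
def resT (Om : FinGraph) (T : Finset (Finset ℕ)) : Finset (Finset ℕ) :=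
  T.biUnion (comps Om)

/-- Shift of a vertex set by `n`. -/
def shiftF (n : ℕ) (s : Finset ℕ) : Finset ℕ := s.image (fun v => v + n)

/-- Shift of a family of vertex sets by `n`. -/
def shiftT (n : ℕ) (S : Finset (Finset ℕ)) : Finset (Finset ℕ) := S.image (shiftF n)

/-- Shift of a graph by `n`. -/
def shiftG (n : ℕ) (G : FinGraph) : FinGraph where
  verts := shiftF n G.verts
  Adj v w := ∃ a b, G.Adj a b ∧ v = a + n ∧ w = b + n
  symm := by
    rintro v w ⟨a, b, h, rfl, rfl⟩
    exact ⟨b, a, G.symm _ _ h, rfl, rfl⟩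
  loopless := by
    rintro v ⟨a, b, h, ha, hb⟩
    have : a = b := by omega
    exact G.loopless b (this ▸ h)
  support := by
    rintro v w ⟨a, b, h, rfl, rfl⟩
    exact ⟨Finset.mem_image.mpr ⟨a, (G.support _ _ h).1, rfl⟩,
      Finset.mem_image.mpr ⟨b, (G.support _ _ h).2, rfl⟩⟩

/-- `X_T` : the vertices belonging to no proper tube of `T`. -/
def freeVerts (G : FinGraph) (T : Finset (Finset ℕ)) : Finset ℕ :=
  G.verts.filter (fun v => ∀ s ∈ T, s ≠ G.verts → v ∉ s)

/-- The endpoint `max X_T` of the joining edge. -/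
def joinA (G : FinGraph) (T : Finset (Finset ℕ)) : ℕ :=
  WithBot.unbotD 0 (freeVerts G T).max

/-- The endpoint `n + min X_S` of the joining edge. -/
def joinB (Om : FinGraph) (S : Finset (Finset ℕ)) (n : ℕ) : ℕ :=
  n + WithTop.untopD 0 (freeVerts Om S).min

/-- Vertex set of the joined graph `Γ ∪_{T,S} Ω`. -/
def joinVerts (G Om : FinGraph) (n : ℕ) : Finset ℕ := G.verts ∪ shiftF n Om.verts

/-- The joined graph `Γ ∪_{T,S} Ω`: the disjoint union (with `Ω` shifted by `n`)
plus one edge from `max X_T` to `n + min X_S`. -/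
def joinG (G Om : FinGraph) (T S : Finset (Finset ℕ)) (n : ℕ) : FinGraph where
  verts := joinVerts G Om n
  Adj v w := G.Adj v w ∨ (shiftG n Om).Adj v w ∨
    (v ≠ w ∧ v ∈ joinVerts G Om n ∧ w ∈ joinVerts G Om n ∧
      ((v = joinA G T ∧ w = joinB Om S n) ∨ (w = joinA G T ∧ v = joinB Om S n)))
  symm := by
    rintro v w (h | h | ⟨hne, hv, hw, hc⟩)
    · exact Or.inl (G.symm _ _ h)
    · exact Or.inr (Or.inl ((shiftG n Om).symm _ _ h))
    · exact Or.inr (Or.inr ⟨hne.symm, hw, hv, hc.symm⟩)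
  loopless := by
    rintro v (h | h | ⟨hne, _⟩)
    · exact G.loopless v h
    · exact (shiftG n Om).loopless v h
    · exact hne rfl
  support := by
    rintro v w (h | h | ⟨_, hv, hw, _⟩)
    · exact ⟨Finset.mem_union_left _ (G.support _ _ h).1,
        Finset.mem_union_left _ (G.support _ _ h).2⟩
    · exact ⟨Finset.mem_union_right _ ((shiftG n Om).support _ _ h).1,
        Finset.mem_union_right _ ((shiftG n Om).support _ _ h).2⟩
    · exact ⟨hv, hw⟩

/-- `T ▷ S`. -/
def trR (G Om : FinGraph) (T S : Finset (Finset ℕ)) (n : ℕ) : Finset (Finset ℕ) :=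
  T ∪ shiftT n (properTubes Om S) ∪ {joinVerts G Om n}

/-- `T ◁ S`. -/
def trL (G Om : FinGraph) (T S : Finset (Finset ℕ)) (n : ℕ) : Finset (Finset ℕ) :=
  properTubes G T ∪ shiftT n S ∪ {joinVerts G Om n}

/-- `T ⊥ S`. -/
def tPerp (G Om : FinGraph) (T S : Finset (Finset ℕ)) (n : ℕ) : Finset (Finset ℕ) :=
  properTubes G T ∪ shiftT n (properTubes Om S) ∪ {joinVerts G Om n}

/-- Equality of graphs: same vertex set and same edges. -/
def GEq (A B : FinGraph) : Prop :=
  A.verts = B.verts ∧ ∀ v w, A.Adj v w ↔ B.Adj v w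

/-- Index type for the basis of `Tub⁺`: `none` is the unit `1`, `some (Γ,T)` is a pair. -/
abbrev TubIdx : Type := Option (FinGraph × Finset (Finset ℕ))

/-- A pair `(Γ,T)` relabelled order-preservingly to standard vertex set, identified
with the unit `1` when the vertex set is empty. -/
def embPair (G : FinGraph) (T : Finset (Finset ℕ)) : TubIdx :=
  if G.verts = ∅ then none else some (relabelG G, relabelT G.verts T)

/-- The value of the pre-Lie coproduct `Δ_•` on a basis element. -/
def deltaFun (K : Type) [CommRing K] (i : TubIdx) :
    (TubIdx →₀ K) ⊗[K] (TubIdx →₀ K) :=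
  match i with
  | none => Finsupp.single (none : TubIdx) (1 : K) ⊗ₜ[K] Finsupp.single (none : TubIdx) (1 : K)
  | some (G, T) =>
      (∑ t ∈ T, (Finsupp.single (embPair (induce G t) (restrictT T t)) (1 : K)) ⊗ₜ[K]
        (Finsupp.single (embPair (reconn G t) (indStar T t)) (1 : K)))
      + (Finsupp.single (none : TubIdx) (1 : K)) ⊗ₜ[K]
          (Finsupp.single (some (G, T) : TubIdx) (1 : K))

/-- The pre-Lie coproduct `Δ_•` on `Tub⁺`, the free module on `TubIdx`. -/
def delta (K : Type) [CommRing K] :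
    (TubIdx →₀ K) →ₗ[K] (TubIdx →₀ K) ⊗[K] (TubIdx →₀ K) :=
  Finsupp.lift ((TubIdx →₀ K) ⊗[K] (TubIdx →₀ K)) K TubIdx (deltaFun K)

end CDTub

/-!
The only edge of `Γ ∪_{T,S} Ω` between the two sides joins `a = max X_T` to `b = n + min X_S`,
and the hypotheses on the vertex sets put `Γ` in `[1, n]` and the shifted `Ω` in `(n, n + m]`.
Hence tubes of either side remain tubes, compatible pairs remain compatible, and a tube of `Γ`
is far apart from a tube of the shifted `Ω` as soon as the first misses `a` or the second
misses `b`. Free vertices lie in no proper tube, which settles the cross pairs of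
`T ▷ S`, `T ◁ S` and `T ⊥ S`. Finally the joined graph is connected because `X_T` and `X_S`
are nonempty: the maximal proper tubes of a tubing are pairwise far apart, so they cannot
cover a connected graph.
-/

namespace CDTub

open Finset

lemma mem_shiftF {n a : ℕ} {s : Finset ℕ} : a + n ∈ shiftF n s ↔ a ∈ s :=
  (add_left_injective n).mem_finset_image

lemma shiftF_injective (n : ℕ) : Function.Injective (shiftF n) :=
  image_injective (add_left_injective n)

lemma FarApart.symm {G : FinGraph} {a b : Finset ℕ} (h : FarApart G a b) : FarApart G b a :=
  ⟨h.1.symm, fun ⟨v, hv, w, hw, hadj⟩ => h.2 ⟨w, hw, v, hv, G.symm _ _ hadj⟩⟩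

lemma VConn.walk_of_subset {G : FinGraph} {s r : Finset ℕ} (hs : VConn G s) (hsr : s ⊆ r)
    {v w : ℕ} (hv : v ∈ s) (hw : w ∈ s) :
    Relation.ReflTransGen (fun a b => a ∈ r ∧ b ∈ r ∧ G.Adj a b) v w :=
  Relation.ReflTransGen.mono (fun _ _ ⟨ha, hb, hab⟩ => ⟨hsr ha, hsr hb, hab⟩) _ _
    (hs v hv w hw)

lemma VConn.image {G H : FinGraph} {s : Finset ℕ} {f : ℕ → ℕ}
    (hf : ∀ v w, G.Adj v w → H.Adj (f v) (f w)) (hs : VConn G s) : VConn H (s.image f) := by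
  simp only [VConn, forall_mem_image]
  intro v hv w hw
  exact (hs v hv w hw).lift f fun a b ⟨ha, hb, hab⟩ =>
    ⟨mem_image_of_mem f ha, mem_image_of_mem f hb, hf a b hab⟩

lemma VConn.union_of_adj {G : FinGraph} {s u : Finset ℕ} {a b : ℕ} (hs : VConn G s)
    (hu : VConn G u) (ha : a ∈ s) (hb : b ∈ u) (hab : G.Adj a b) : VConn G (s ∪ u) := by
  have ha' := mem_union_left u ha
  have hb' := mem_union_right s hb
  have reach : ∀ v ∈ s ∪ u,
      Relation.ReflTransGen (fun x y => x ∈ s ∪ u ∧ y ∈ s ∪ u ∧ G.Adj x y) a v ∧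
      Relation.ReflTransGen (fun x y => x ∈ s ∪ u ∧ y ∈ s ∪ u ∧ G.Adj x y) v a := by
    intro v hv
    rcases mem_union.1 hv with hv | hv
    · exact ⟨hs.walk_of_subset subset_union_left ha hv,
        hs.walk_of_subset subset_union_left hv ha⟩
    · exact ⟨.head ⟨ha', hb', hab⟩ (hu.walk_of_subset subset_union_right hb hv),
        .tail (hu.walk_of_subset subset_union_right hv hb) ⟨hb', ha', G.symm _ _ hab⟩⟩
  exact fun v hv w hw => (reach v hv).2.trans (reach w hw).1

lemma VConn.subset_of_adj_closed {G : FinGraph} {s u : Finset ℕ} {v : ℕ} (hs : VConn G s)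
    (hv : v ∈ s) (hvu : v ∈ u) (hu : ∀ a b, a ∈ u → b ∈ s → G.Adj a b → b ∈ u) :
    s ⊆ u := by
  intro w hw
  have hwalk := hs v hv w hw
  clear hw
  induction hwalk with
  | refl => exact hvu
  | tail _ hbc ih => exact hu _ _ ih hbc.2.1 hbc.2.2

lemma IsTube.image {G H : FinGraph} {t : Finset ℕ} {f : ℕ → ℕ}
    (hV : ∀ v ∈ G.verts, f v ∈ H.verts) (hA : ∀ v w, G.Adj v w → H.Adj (f v) (f w))
    (ht : IsTube G t) : IsTube H (t.image f) :=
  ⟨ht.1.image f, by simpa only [image_subset_iff] using fun v hv => hV v (ht.2.1 hv),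
    ht.2.2.image hA⟩

lemma isTubing_union_union_univ {H : FinGraph} {A B : Finset (Finset ℕ)} (hH : IsConnGraph H)
    (hAt : ∀ t ∈ A, IsTube H t) (hBt : ∀ t ∈ B, IsTube H t)
    (hAc : (A : Set (Finset ℕ)).Pairwise (Compatible H))
    (hBc : (B : Set (Finset ℕ)).Pairwise (Compatible H))
    (hAB : ∀ a ∈ A, ∀ b ∈ B, FarApart H a b) : IsTubing H (A ∪ B ∪ {H.verts}) := by
  have htube : ∀ t ∈ A ∪ B ∪ {H.verts}, IsTube H t := by
    simp only [mem_union, mem_singleton]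
    rintro t ((ht | ht) | rfl)
    exacts [hAt t ht, hBt t ht, hH]
  refine ⟨mem_union_right _ (mem_singleton_self _), htube, ?_⟩
  change (↑(A ∪ B ∪ {H.verts}) : Set (Finset ℕ)).Pairwise (Compatible H)
  rw [coe_union, coe_union, coe_singleton, Set.union_singleton, Set.pairwise_insert,
    Set.pairwise_union]
  refine ⟨⟨hAc, hBc, fun a ha b hb _ => ⟨Or.inr (Or.inr (hAB a ha b hb)),
    Or.inr (Or.inr (hAB a ha b hb).symm)⟩⟩, fun t ht _ => ?_⟩
  have hsub : t ⊆ H.verts := by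
    rcases ht with ht | ht
    exacts [(hAt t ht).2.1, (hBt t ht).2.1]
  exact ⟨Or.inr (Or.inl hsub), Or.inl hsub⟩

lemma notMem_of_mem_freeVerts {G : FinGraph} {T : Finset (Finset ℕ)} {v : ℕ} {s : Finset ℕ}
    (hv : v ∈ freeVerts G T) (hs : s ∈ properTubes G T) : v ∉ s :=
  (mem_filter.1 hv).2 s (mem_filter.1 hs).1 (mem_filter.1 hs).2

section MaximalTubes

variable {G : FinGraph} {T : Finset (Finset ℕ)}

lemma exists_mem_maxtP_of_mem {s : Finset ℕ} {v : ℕ} (hs : s ∈ properTubes G T)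
    (hv : v ∈ s) :
    ∃ m ∈ MaxtP G T, v ∈ m := by
  obtain ⟨m, hsm, hm, hmax⟩ := exists_le_maximal _ hs
  exact ⟨m, mem_filter.2 ⟨hm, fun s' hs' hms' => le_antisymm hms' (hmax hs' hms')⟩, hsm hv⟩

lemma IsTubing.farApart_of_mem_maxtP (hT : IsTubing G T) {m m' : Finset ℕ}
    (hm : m ∈ MaxtP G T) (hm' : m' ∈ MaxtP G T) (hne : m ≠ m') : FarApart G m m' := by
  obtain ⟨hmT, hmmax⟩ := mem_filter.1 hm
  obtain ⟨hm'T, hm'max⟩ := mem_filter.1 hm'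
  rcases hT.2.2 m (mem_filter.1 hmT).1 m' (mem_filter.1 hm'T).1 hne with h | h | h
  · exact absurd (hmmax m' hm'T h) hne
  · exact absurd (hm'max m hmT h).symm hne
  · exact h

lemma IsTubing.freeVerts_nonempty (hGc : IsConnGraph G) (hT : IsTubing G T) :
    (freeVerts G T).Nonempty := by
  by_contra hempty
  have covered : ∀ v ∈ G.verts, ∃ m ∈ MaxtP G T, v ∈ m := by
    intro v hv
    by_contra! hfree
    refine hempty ⟨v, mem_filter.2 ⟨hv, fun s hs hne hvs => ?_⟩⟩
    obtain ⟨m, hm, hvm⟩ := exists_mem_maxtP_of_mem (mem_filter.2 ⟨hs, hne⟩) hvs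
    exact hfree m hm hvm
  obtain ⟨v₀, hv₀⟩ := hGc.1
  obtain ⟨m₀, hm₀, hv₀m₀⟩ := covered v₀ hv₀
  have hclosed : ∀ a b, a ∈ m₀ → b ∈ G.verts → G.Adj a b → b ∈ m₀ := by
    intro a b ha hb hab
    obtain ⟨m₁, hm₁, hbm₁⟩ := covered b hb
    by_contra hbm₀
    have hne : m₀ ≠ m₁ := fun h => hbm₀ (h ▸ hbm₁)
    exact (hT.farApart_of_mem_maxtP hm₀ hm₁ hne).2 ⟨a, ha, b, hbm₁, hab⟩
  have hproper := mem_filter.1 (mem_filter.1 hm₀).1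
  exact hproper.2 (subset_antisymm (hT.2.1 m₀ hproper.1).2.1
    (hGc.2.2.subset_of_adj_closed hv₀ hv₀m₀ hclosed))

lemma joinA_mem_freeVerts (hGc : IsConnGraph G) (hT : IsTubing G T) :
    joinA G T ∈ freeVerts G T := by
  have hne := hT.freeVerts_nonempty hGc
  rw [joinA, ← coe_max' hne, WithBot.unbotD_coe]
  exact max'_mem _ hne

lemma joinB_mem_shiftF_freeVerts (n : ℕ) (hGc : IsConnGraph G) (hT : IsTubing G T) :
    joinB G T n ∈ shiftF n (freeVerts G T) := by
  have hne := hT.freeVerts_nonempty hGc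
  rw [joinB, ← coe_min' hne, WithTop.untopD_coe, add_comm]
  exact mem_image_of_mem _ (min'_mem _ hne)

lemma joinB_mem_shiftF_verts (n : ℕ) (hGc : IsConnGraph G) (hT : IsTubing G T) :
    joinB G T n ∈ shiftF n G.verts :=
  image_subset_image (filter_subset _ _) (joinB_mem_shiftF_freeVerts n hGc hT)

end MaximalTubes

section JoinedGraph

variable {G Om : FinGraph} {T S : Finset (Finset ℕ)} {n : ℕ}

lemma isTube_joinG_left {t : Finset ℕ} (ht : IsTube G t) : IsTube (joinG G Om T S n) t := by
  simpa using ht.image (f := id) (fun _ hv => mem_union_left _ hv) fun _ _ h => Or.inl h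

lemma isTube_joinG_shiftF {s : Finset ℕ} (hs : IsTube Om s) :
    IsTube (joinG G Om T S n) (shiftF n s) :=
  hs.image (fun _ hv => mem_union_right _ (mem_image_of_mem _ hv))
    fun v w h => Or.inr (Or.inl ⟨v, w, h, rfl, rfl⟩)

lemma lt_of_mem_shiftF (hOm : ∀ v ∈ Om.verts, 0 < v) {w : ℕ} (hw : w ∈ shiftF n Om.verts) :
    n < w := by
  obtain ⟨a, ha, rfl⟩ := mem_image.1 hw
  have := hOm a ha
  omega

lemma joinG_adj_left (hG : ∀ v ∈ G.verts, v ≤ n) (hOm : ∀ v ∈ Om.verts, 0 < v)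
    (hB : joinB Om S n ∈ shiftF n Om.verts) {v w : ℕ} (hv : v ∈ G.verts)
    (hw : w ∈ G.verts) :
    (joinG G Om T S n).Adj v w ↔ G.Adj v w := by
  refine ⟨fun h => ?_, Or.inl⟩
  have hBn := lt_of_mem_shiftF hOm hB
  have hvn := hG v hv
  have hwn := hG w hw
  rcases h with h | ⟨a, b, hab, rfl, rfl⟩ | ⟨-, -, -, ⟨-, rfl⟩ | ⟨-, rfl⟩⟩
  · exact h
  all_goals first | omega | (have := hOm a (Om.support a b hab).1; omega)

lemma joinG_adj_shiftF (hG : ∀ v ∈ G.verts, v ≤ n) (hOm : ∀ v ∈ Om.verts, 0 < v)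
    (hA : joinA G T ∈ G.verts) {a b : ℕ} (ha : a ∈ Om.verts) (hb : b ∈ Om.verts) :
    (joinG G Om T S n).Adj (a + n) (b + n) ↔ Om.Adj a b := by
  refine ⟨fun h => ?_, fun h => Or.inr (Or.inl ⟨a, b, h, rfl, rfl⟩)⟩
  have hAn := hG _ hA
  have ha0 := hOm a ha
  have hb0 := hOm b hb
  rcases h with h | ⟨a', b', h, ha', hb'⟩ | ⟨-, -, -, ⟨h, -⟩ | ⟨h, -⟩⟩
  · have := hG _ (G.support _ _ h).1
    omega
  · obtain rfl : a = a' := by omega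
    obtain rfl : b = b' := by omega
    exact h
  all_goals omega

lemma joinG_adj_cross (hG : ∀ v ∈ G.verts, v ≤ n) (hOm : ∀ v ∈ Om.verts, 0 < v)
    (hA : joinA G T ∈ G.verts) {v w : ℕ} (hv : v ∈ G.verts) (hw : w ∈ shiftF n Om.verts) :
    (joinG G Om T S n).Adj v w ↔ v = joinA G T ∧ w = joinB Om S n := by
  have hvn := hG v hv
  have hwn := lt_of_mem_shiftF hOm hw
  refine ⟨fun h => ?_, fun h => Or.inr (Or.inr ⟨by omega, mem_union_left _ hv,
    mem_union_right _ hw, Or.inl h⟩)⟩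
  have hAn := hG _ hA
  rcases h with h | ⟨a, b, hab, rfl, rfl⟩ | ⟨-, -, -, h | ⟨rfl, -⟩⟩
  · have := hG _ (G.support _ _ h).2
    omega
  · have := hOm a (Om.support a b hab).1
    omega
  · exact h
  · omega

lemma Compatible.joinG_left (hG : ∀ v ∈ G.verts, v ≤ n) (hOm : ∀ v ∈ Om.verts, 0 < v)
    (hB : joinB Om S n ∈ shiftF n Om.verts) {t t' : Finset ℕ} (ht : t ⊆ G.verts)
    (ht' : t' ⊆ G.verts) (h : Compatible G t t') : Compatible (joinG G Om T S n) t t' := by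
  rcases h with h | h | ⟨hd, hno⟩
  · exact Or.inl h
  · exact Or.inr (Or.inl h)
  · exact Or.inr (Or.inr ⟨hd, fun ⟨v, hv, w, hw, hadj⟩ =>
      hno ⟨v, hv, w, hw, (joinG_adj_left hG hOm hB (ht hv) (ht' hw)).1 hadj⟩⟩)

lemma Compatible.joinG_shiftF (hG : ∀ v ∈ G.verts, v ≤ n) (hOm : ∀ v ∈ Om.verts, 0 < v)
    (hA : joinA G T ∈ G.verts) {s s' : Finset ℕ} (hs : s ⊆ Om.verts) (hs' : s' ⊆ Om.verts)
    (h : Compatible Om s s') : Compatible (joinG G Om T S n) (shiftF n s) (shiftF n s') := by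
  rcases h with h | h | ⟨hd, hno⟩
  · exact Or.inl (image_subset_image h)
  · exact Or.inr (Or.inl (image_subset_image h))
  · refine Or.inr (Or.inr ⟨(disjoint_image (add_left_injective n)).2 hd, ?_⟩)
    rintro ⟨_, hv, _, hw, hadj⟩
    obtain ⟨a, ha, rfl⟩ := mem_image.1 hv
    obtain ⟨b, hb, rfl⟩ := mem_image.1 hw
    exact hno ⟨a, ha, b, hb, (joinG_adj_shiftF hG hOm hA (hs ha) (hs' hb)).1 hadj⟩

lemma farApart_joinG_of_notMem (hG : ∀ v ∈ G.verts, v ≤ n) (hOm : ∀ v ∈ Om.verts, 0 < v)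
    (hA : joinA G T ∈ G.verts) {t u : Finset ℕ} (ht : t ⊆ G.verts)
    (hu : u ⊆ shiftF n Om.verts) (hsep : joinA G T ∉ t ∨ joinB Om S n ∉ u) :
    FarApart (joinG G Om T S n) t u := by
  refine ⟨disjoint_left.2 fun x hxt hxu => ?_, ?_⟩
  · have := hG x (ht hxt)
    have := lt_of_mem_shiftF hOm (hu hxu)
    omega
  · rintro ⟨v, hv, w, hw, hadj⟩
    obtain ⟨rfl, rfl⟩ := (joinG_adj_cross hG hOm hA (ht hv) (hu hw)).1 hadj
    exact hsep.elim (· hv) (· hw)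

lemma isConnGraph_joinG (hG : ∀ v ∈ G.verts, v ≤ n) (hOm : ∀ v ∈ Om.verts, 0 < v)
    (hA : joinA G T ∈ G.verts) (hB : joinB Om S n ∈ shiftF n Om.verts)
    (hGc : IsConnGraph G) (hOmc : IsConnGraph Om) : IsConnGraph (joinG G Om T S n) :=
  ⟨hGc.1.mono subset_union_left, subset_rfl,
    (isTube_joinG_left hGc).2.2.union_of_adj (isTube_joinG_shiftF hOmc).2.2 hA hB
      ((joinG_adj_cross hG hOm hA hA hB).2 ⟨rfl, rfl⟩)⟩

lemma isTubing_joinG (hG : ∀ v ∈ G.verts, v ≤ n) (hOm : ∀ v ∈ Om.verts, 0 < v)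
    (hGc : IsConnGraph G) (hOmc : IsConnGraph Om) (hT : IsTubing G T) (hS : IsTubing Om S)
    {T' S' : Finset (Finset ℕ)} (hT' : T' ⊆ T) (hS' : S' ⊆ S)
    (hsep : ∀ t ∈ T', ∀ s ∈ S', joinA G T ∉ t ∨ joinB Om S n ∉ shiftF n s) :
    IsTubing (joinG G Om T S n) (T' ∪ shiftT n S' ∪ {joinVerts G Om n}) := by
  have hA := (mem_filter.1 (joinA_mem_freeVerts hGc hT)).1
  have hB := joinB_mem_shiftF_verts n hOmc hS
  have hTsub : ∀ t ∈ T', t ⊆ G.verts := fun t ht => (hT.2.1 t (hT' ht)).2.1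
  have hSsub : ∀ s ∈ S', s ⊆ Om.verts := fun s hs => (hS.2.1 s (hS' hs)).2.1
  refine isTubing_union_union_univ (isConnGraph_joinG hG hOm hA hB hGc hOmc)
    (fun t ht => isTube_joinG_left (hT.2.1 t (hT' ht))) ?_
    (fun t ht t' ht' hne => (hT.2.2 t (hT' ht) t' (hT' ht') hne).joinG_left hG hOm hB
      (hTsub t ht) (hTsub t' ht')) ?_ ?_
  · simp only [shiftT, forall_mem_image]
    exact fun s hs => isTube_joinG_shiftF (hS.2.1 s (hS' hs))
  · rw [shiftT, coe_image, (shiftF_injective n).injOn.pairwise_image]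
    exact fun s hs s' hs' hne => (hS.2.2 s (hS' hs) s' (hS' hs') hne).joinG_shiftF hG hOm hA
      (hSsub s hs) (hSsub s' hs')
  · simp only [shiftT, forall_mem_image]
    exact fun t ht s hs => farApart_joinG_of_notMem hG hOm hA (hTsub t ht)
      (image_subset_image (hSsub s hs)) (hsep t ht s hs)

end JoinedGraph

end CDTub

open CDTub in
/-- `T ▷ S`, `T ◁ S` and `T ⊥ S` are tubings of the joined graph `Γ ∪_{T,S} Ω`, and
`(T ▷ S) ∖ {t_∪}` contains `T`. -/
theorem join_products_are_tubings (G Om : FinGraph) (n m : ℕ)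
    (hG : G.verts = Finset.Icc 1 n) (hOm : Om.verts = Finset.Icc 1 m)
    (hGc : IsConnGraph G) (hOmc : IsConnGraph Om)
    (T S : Finset (Finset ℕ)) (hT : IsTubing G T) (hS : IsTubing Om S) :
    T ⊆ (trR G Om T S n).erase (joinVerts G Om n) ∧
    IsTubing (joinG G Om T S n) (trR G Om T S n) ∧
    IsTubing (joinG G Om T S n) (trL G Om T S n) ∧
    IsTubing (joinG G Om T S n) (tPerp G Om T S n) := by
  have hGn : ∀ v ∈ G.verts, v ≤ n := fun v hv => (Finset.mem_Icc.1 (hG ▸ hv)).2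
  have hOm0 : ∀ v ∈ Om.verts, 0 < v := fun v hv => (Finset.mem_Icc.1 (hOm ▸ hv)).1
  have hAfree := joinA_mem_freeVerts hGc hT
  obtain ⟨b, hbfree, hbB⟩ := Finset.mem_image.1 (joinB_mem_shiftF_freeVerts n hOmc hS)
  have hAproper : ∀ t ∈ properTubes G T, joinA G T ∉ t := fun _ =>
    notMem_of_mem_freeVerts hAfree
  have hBproper : ∀ s ∈ properTubes Om S, joinB Om S n ∉ shiftF n s := fun s hs hBs =>
    notMem_of_mem_freeVerts hbfree hs (mem_shiftF.1 (hbB ▸ hBs))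
  refine ⟨fun t ht =>
      Finset.mem_erase.2 ⟨?_, Finset.mem_union_left _ (Finset.mem_union_left _ ht)⟩,
    isTubing_joinG hGn hOm0 hGc hOmc hT hS subset_rfl (Finset.filter_subset _ _)
      fun _ _ s hs => Or.inr (hBproper s hs),
    isTubing_joinG hGn hOm0 hGc hOmc hT hS (Finset.filter_subset _ _) subset_rfl
      fun t ht _ _ => Or.inl (hAproper t ht),
    isTubing_joinG hGn hOm0 hGc hOmc hT hS (Finset.filter_subset _ _) (Finset.filter_subset _ _)
      fun t ht _ _ => Or.inl (hAproper t ht)⟩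
  -- `t_∪` contains `joinB > n`, so it is not contained in the vertex set of `Γ`.
  rintro rfl
  have hB := joinB_mem_shiftF_verts n hOmc hS
  have := hGn _ ((hT.2.1 _ ht).2.1 (Finset.mem_union_right _ hB))
  have := lt_of_mem_shiftF hOm0 hB
  omega
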